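/- arXiv:math/9903012 — 4 statements merged into one kernel-verified Lean document; each statement's English description precedes it below -/
import Mathlib

section
/- For every positive integer n, odd positive integer q, the sum over all elements w of the hyperoctahedral group B_n (signed permutations of {1,...,n}) of the product (q+1-2d(w))(q+3-2d(w))···(q+2n-1-2d(w)) equals q^n · 2^n · n!, where d(w) is the number of type-B descents of w. -/
/-- A signed permutation in `B_n`, encoded as an underlying permutation of
`{0,...,n-1}` together with a sign for each position. -/
abbrev SignedPerm (n : ℕ) := Equiv.Perm (Fin n) × (Fin n → Bool)

/-- The value `w(i) ∈ {±1, ..., ±n}` of the signed permutation at position `i`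
(`1`-indexed position `i+1`). -/
def signedVal (n : ℕ) (w : SignedPerm n) (i : Fin n) : ℤ :=
  if w.2 i then -((w.1 i : ℤ) + 1) else (w.1 i : ℤ) + 1

/-- Rank of a value in the linear order `Λ`:
`+1 < +2 < ... < +n < n+1 < -n < ... < -2 < -1`. -/
def lamRank (n : ℕ) (a : ℤ) : ℤ := if 0 < a then a else 2 * n + 2 + a

/-- The value at position `i+1`, with the convention `w(n+1) = n+1`. -/
def nextVal (n : ℕ) (w : SignedPerm n) (i : Fin n) : ℤ :=
  if h : (i : ℕ) + 1 < n then signedVal n w ⟨(i : ℕ) + 1, h⟩ else ((n : ℤ) + 1)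

/-- The number of type-`B` descents of `w`:
`d(w) = |{i : 1 ≤ i ≤ n, w(i) <_Λ w(i+1)}|` with `w(n+1) = n+1`. -/
def bDescents (n : ℕ) (w : SignedPerm n) : ℕ :=
  (Finset.univ.filter (fun i : Fin n =>
    lamRank n (signedVal n w i) < lamRank n (nextVal n w i))).card

/-!
Every element of `B_{n+1}` arises exactly once by inserting a letter `±(n+1)` into some
`w ∈ B_n` at one of `n+1` positions. Such an insertion raises `d` by `0` or `1`, so the
product for the new element is the product for `w` times `q+2n+1-2d(w)` or `q-1-2d(w)`.
Among the `2n+2` insertions into `w` exactly `2n+1-2d(w)` raise `d`: running over the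
positions for a fixed new letter, each ascent of `w` is broken once, each old letter forms
exactly one new ascent with the new letter (on its left or on its right), and the boundary
value `w(n+1)` forms one more for `+(n+1)` only. Hence `w` contributes `(2n+2)q` times its
own product, and induction on `n` gives `q^n 2^n n!`.
-/

open Finset

section Words

variable {α : Type*}

def insertAt (f : ℕ → α) (p : ℕ) (v : α) (j : ℕ) : α :=
  if j < p then f j else if j = p then v else f (j - 1)

@[simp]
lemma insertAt_self (f : ℕ → α) (p : ℕ) (v : α) : insertAt f p v p = v := by
  simp [insertAt]

lemma insertAt_succAbove (f : ℕ → α) (v : α) {n : ℕ} (p : Fin (n + 1)) (i : Fin n) :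
    insertAt f p v (p.succAbove i) = f i := by
  rcases lt_or_ge i.castSucc p with h | h
  · rw [Fin.succAbove_of_castSucc_lt _ _ h]
    have h' : (i : ℕ) < p := h
    simp [insertAt, h']
  · rw [Fin.succAbove_of_le_castSucc _ _ h]
    have h' : (p : ℕ) ≤ i := Fin.le_def.mp h
    simp [insertAt, show ¬ (i : ℕ) + 1 < p by omega, show (i : ℕ) + 1 ≠ p by omega]

variable [LinearOrder α]

def ascents (f : ℕ → α) (n : ℕ) : ℕ := #{i ∈ range n | f i < f (i + 1)}

lemma ascents_eq_sum (f : ℕ → α) (n : ℕ) :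
    ascents f n = ∑ i ∈ range n, if f i < f (i + 1) then 1 else 0 :=
  card_filter _ _

@[simp]
lemma ascents_zero (f : ℕ → α) : ascents f 0 = 0 := rfl

lemma ascents_succ (f : ℕ → α) (n : ℕ) :
    ascents f (n + 1) = ascents f n + if f n < f (n + 1) then 1 else 0 := by
  simp only [ascents_eq_sum, sum_range_succ]

lemma ascents_congr {f g : ℕ → α} {n : ℕ} (h : ∀ i ≤ n, f i = g i) :
    ascents f n = ascents g n := by
  simp only [ascents_eq_sum]
  refine sum_congr rfl fun i hi => ?_
  rw [mem_range] at hi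
  rw [h i hi.le, h (i + 1) hi]

lemma ascents_comp_strictMono {β : Type*} [LinearOrder β] {g : α → β}
    (hg : StrictMono g) (f : ℕ → α) (n : ℕ) : ascents (g ∘ f) n = ascents f n := by
  simp [ascents, hg.lt_iff_lt]

/-- Letters after the insertion point keep their ascents. -/
lemma ascents_insertAt_add {f : ℕ → α} {v : α} {p n : ℕ} (hp : p ≤ n) :
    ascents (insertAt f p v) (n + 1) + ascents f p =
      ascents (insertAt f p v) (p + 1) + ascents f n := by
  induction n, hp using Nat.le_induction with
  | base => ring
  | succ n hpn ih =>
    have hshift : insertAt f p v (n + 1) = f n ∧ insertAt f p v (n + 2) = f (n + 1) := by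
      simp [insertAt, show ¬ n + 1 < p by omega, show n + 1 ≠ p by omega,
        show ¬ n + 2 < p by omega, show n + 2 ≠ p by omega]
    rw [ascents_succ _ (n + 1), ascents_succ f n, hshift.1, hshift.2]
    omega

lemma ascents_insertAt_zero (f : ℕ → α) (v : α) (n : ℕ) :
    ascents (insertAt f 0 v) (n + 1) = ascents f n + if v < f 0 then 1 else 0 := by
  have h := ascents_insertAt_add (f := f) (v := v) (Nat.zero_le n)
  have hfirst : insertAt f 0 v 1 = f 0 := by simp [insertAt]
  rw [ascents_succ _ 0, ascents_zero, ascents_zero, insertAt_self, hfirst] at h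
  omega

lemma ascents_insertAt_succ (f : ℕ → α) (v : α) {p n : ℕ} (hp : p < n) :
    ascents (insertAt f (p + 1) v) (n + 1) + (if f p < f (p + 1) then 1 else 0) =
      ascents f n + (if f p < v then 1 else 0) + if v < f (p + 1) then 1 else 0 := by
  have h := ascents_insertAt_add (f := f) (v := v) (p := p + 1) hp
  have hlow : ascents (insertAt f (p + 1) v) p = ascents f p :=
    ascents_congr fun i hi => by simp [insertAt, show i < p + 1 by omega]
  have hnear : insertAt f (p + 1) v p = f p ∧ insertAt f (p + 1) v (p + 2) = f (p + 1) := by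
    simp [insertAt]
  rw [ascents_succ (insertAt f (p + 1) v) (p + 1), ascents_succ (insertAt f (p + 1) v) p,
    ascents_succ f p, hlow, insertAt_self, hnear.1, hnear.2] at h
  omega

lemma ascents_insertAt_eq_or_eq (f : ℕ → α) (v : α) {p n : ℕ} (hp : p ≤ n) :
    ascents (insertAt f p v) (n + 1) = ascents f n ∨
      ascents (insertAt f p v) (n + 1) = ascents f n + 1 := by
  rcases p with _ | p
  · rw [ascents_insertAt_zero]
    split_ifs <;> simp
  · have h := ascents_insertAt_succ f v hp
    have h₁ : f p < f (p + 1) → f p < v ∨ v < f (p + 1) := fun h =>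
      (lt_or_ge (f p) v).imp id fun hv => hv.trans_lt h
    have h₂ : f p < v → v < f (p + 1) → f p < f (p + 1) := lt_trans
    split_ifs at h <;> first | omega | tauto

lemma sum_ascents_insertAt (f : ℕ → α) (v : α) (n : ℕ) (hv : ∀ i < n, f i ≠ v) :
    ∑ p ∈ range (n + 1), ascents (insertAt f p v) (n + 1) =
      n * ascents f n + n + if v < f n then 1 else 0 := by
  set L : ℕ → ℕ := fun i => if f i < v then 1 else 0
  set R : ℕ → ℕ := fun i => if v < f i then 1 else 0
  have hsucc : ∑ i ∈ range n,
      (ascents (insertAt f (i + 1) v) (n + 1) + if f i < f (i + 1) then 1 else 0) =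
        ∑ i ∈ range n, (ascents f n + L i + R (i + 1)) :=
    sum_congr rfl fun i hi => ascents_insertAt_succ f v (mem_range.mp hi)
  have hLR : ∑ i ∈ range n, (L i + R i) = ∑ _i ∈ range n, 1 := by
    refine sum_congr rfl fun i hi => ?_
    rcases (hv i (mem_range.mp hi)).lt_or_gt with h | h <;> simp [L, R, h, lt_asymm h]
  have hR : ∑ i ∈ range n, R i + R n = ∑ i ∈ range n, R (i + 1) + R 0 := by
    rw [← sum_range_succ, sum_range_succ']
  rw [sum_range_succ', ascents_insertAt_zero]
  simp only [sum_add_distrib, sum_const, card_range, smul_eq_mul, ← ascents_eq_sum] at hsucc hLR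
  change _ + (_ + R 0) = _ + _ + R n
  linarith

end Words

lemma prod_range_succ_of_eq_or_eq {R : Type*} [CommRing R] (x : R) {n d d' : ℕ}
    (h : d' = d ∨ d' = d + 1) :
    ∏ j ∈ range (n + 1), (x + 2 * j + 1 - 2 * (d' : R)) =
      (x + 2 * n + 1 - 2 * d - (2 * n + 2) * ((d' : R) - d)) *
        ∏ j ∈ range n, (x + 2 * j + 1 - 2 * (d : R)) := by
  rcases h with rfl | rfl
  · rw [prod_range_succ]
    ring
  · rw [prod_range_succ']
    simp only [Nat.cast_add, Nat.cast_one, Nat.cast_zero]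
    rw [mul_comm]
    congr 1
    · ring
    · exact prod_congr rfl fun j _ => by ring

/-- In `B_n` the Λ-ranks are `1..n` (positive letters), `n+1` (the boundary value) and
`n+2..2n+1` (negative letters). Passing to `B_{n+1}` keeps the order of the old letters and
leaves the ranks `n+1` and `n+3` free for the new letters `+(n+1)` and `-(n+1)`. -/
def liftRank (n : ℕ) (x : ℤ) : ℤ := if x ≤ n then x else if x = n + 1 then x + 1 else x + 2

lemma liftRank_strictMono (n : ℕ) : StrictMono (liftRank n) := by
  intro x y h
  unfold liftRank
  split_ifs <;> omega

lemma liftRank_ne (n : ℕ) (x : ℤ) : liftRank n x ≠ n + 1 ∧ liftRank n x ≠ n + 3 := by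
  unfold liftRank
  split_ifs <;> omega

def rankWord (n : ℕ) (w : SignedPerm n) (i : ℕ) : ℤ :=
  if h : i < n then lamRank n (signedVal n w ⟨i, h⟩) else n + 1

lemma rankWord_val {n : ℕ} (w : SignedPerm n) (i : Fin n) :
    rankWord n w i = lamRank n (signedVal n w i) :=
  dif_pos i.isLt

lemma bDescents_eq_ascents (n : ℕ) (w : SignedPerm n) :
    bDescents n w = ascents (rankWord n w) n := by
  have hnext : ∀ i : Fin n, rankWord n w (i + 1) = lamRank n (nextVal n w i) := by
    intro i
    unfold rankWord nextVal
    split_ifs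
    · rfl
    · simp [lamRank]
  rw [bDescents, ascents_eq_sum, card_filter, ← Fin.sum_univ_eq_sum_range]
  simp only [rankWord_val, hnext]

lemma lamRank_succ_signedVal {n : ℕ} (w : SignedPerm n) (i : Fin n) :
    lamRank (n + 1) (signedVal n w i) = liftRank n (lamRank n (signedVal n w i)) := by
  have h : ((w.1 i : ℕ) : ℤ) < n := by exact_mod_cast (w.1 i).isLt
  unfold signedVal lamRank liftRank
  push_cast
  split_ifs <;> omega

/-- In one-line notation: `σ` with the new largest value inserted at position `p`. -/
def insertMaxPerm {n : ℕ} (σ : Equiv.Perm (Fin n)) (p : Fin (n + 1)) :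
    Equiv.Perm (Fin (n + 1)) :=
  ((finSuccEquiv' p).trans σ.optionCongr).trans (finSuccEquiv' (Fin.last n)).symm

lemma insertMaxPerm_apply_self {n : ℕ} (σ : Equiv.Perm (Fin n)) (p : Fin (n + 1)) :
    insertMaxPerm σ p p = Fin.last n := by
  simp [insertMaxPerm]

lemma insertMaxPerm_apply_succAbove {n : ℕ} (σ : Equiv.Perm (Fin n)) (p : Fin (n + 1))
    (i : Fin n) : insertMaxPerm σ p (p.succAbove i) = (σ i).castSucc := by
  simp [insertMaxPerm, Fin.succAbove_last]

def insertMax {n : ℕ} (w : SignedPerm n) (p : Fin (n + 1)) (s : Bool) : SignedPerm (n + 1) :=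
  (insertMaxPerm w.1 p, p.insertNth s w.2)

lemma signedVal_insertMax_self {n : ℕ} (w : SignedPerm n) (p : Fin (n + 1)) (s : Bool) :
    signedVal (n + 1) (insertMax w p s) p = if s then -((n : ℤ) + 1) else n + 1 := by
  simp [signedVal, insertMax, insertMaxPerm_apply_self]

lemma signedVal_insertMax_succAbove {n : ℕ} (w : SignedPerm n) (p : Fin (n + 1)) (s : Bool)
    (i : Fin n) : signedVal (n + 1) (insertMax w p s) (p.succAbove i) = signedVal n w i := by
  simp [signedVal, insertMax, insertMaxPerm_apply_succAbove]

lemma rankWord_insertMax {n : ℕ} (w : SignedPerm n) (p : Fin (n + 1)) (s : Bool) :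
    rankWord (n + 1) (insertMax w p s) =
      insertAt (liftRank n ∘ rankWord n w) p (if s then n + 3 else n + 1) := by
  funext j
  by_cases hj : j < n + 1
  · obtain ⟨k, rfl⟩ : ∃ k : Fin (n + 1), (k : ℕ) = j := ⟨⟨j, hj⟩, rfl⟩
    rw [rankWord_val]
    rcases eq_or_ne k p with rfl | hk
    · rw [signedVal_insertMax_self, insertAt_self]
      unfold lamRank
      split_ifs <;> omega
    · obtain ⟨i, rfl⟩ := Fin.exists_succAbove_eq hk
      rw [signedVal_insertMax_succAbove, lamRank_succ_signedVal, insertAt_succAbove,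
        Function.comp_apply, rankWord_val]
  · have hp : (p : ℕ) < j := by omega
    simp [rankWord, insertAt, liftRank, hj, hp.ne', show ¬ j < p by omega,
      show ¬ j - 1 < n by omega]

lemma bDescents_insertMax_eq_or_eq {n : ℕ} (w : SignedPerm n) (p : Fin (n + 1)) (s : Bool) :
    bDescents (n + 1) (insertMax w p s) = bDescents n w ∨
      bDescents (n + 1) (insertMax w p s) = bDescents n w + 1 := by
  rw [bDescents_eq_ascents, bDescents_eq_ascents, rankWord_insertMax,
    ← ascents_comp_strictMono (liftRank_strictMono n) (rankWord n w)]
  exact ascents_insertAt_eq_or_eq (liftRank n ∘ rankWord n w) _ p.is_le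

lemma sum_bDescents_insertMax {n : ℕ} (w : SignedPerm n) :
    ∑ p : Fin (n + 1), ∑ s : Bool, bDescents (n + 1) (insertMax w p s) =
      2 * n * bDescents n w + 2 * n + 1 := by
  set g := liftRank n ∘ rankWord n w
  have hsum (v : ℤ) (hv : ∀ i < n, g i ≠ v) :
      ∑ p : Fin (n + 1), ascents (insertAt g p v) (n + 1) =
        n * bDescents n w + n + if v < n + 2 then 1 else 0 := by
    have hlast : g n = n + 2 := by
      simp only [g, Function.comp_apply, rankWord, lt_irrefl, dite_false, liftRank]
      split_ifs <;> omega
    rw [Fin.sum_univ_eq_sum_range (fun p => ascents (insertAt g p v) (n + 1)),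
      sum_ascents_insertAt g v n hv, hlast, ascents_comp_strictMono (liftRank_strictMono n),
      bDescents_eq_ascents]
  simp only [bDescents_eq_ascents (n + 1), rankWord_insertMax]
  rw [sum_comm, Fintype.sum_bool]
  simp only [if_true, Bool.false_eq_true, if_false]
  rw [hsum _ fun i _ => (liftRank_ne n _).2, hsum _ fun i _ => (liftRank_ne n _).1,
    if_neg (by omega), if_pos (by omega)]
  ring

lemma sum_prod_insertMax {R : Type*} [CommRing R] (x : R) {n : ℕ} (w : SignedPerm n) :
    ∑ p : Fin (n + 1), ∑ s : Bool,
        ∏ j ∈ range (n + 1), (x + 2 * j + 1 - 2 * (bDescents (n + 1) (insertMax w p s) : R)) =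
      (2 * n + 2) * x * ∏ j ∈ range n, (x + 2 * j + 1 - 2 * (bDescents n w : R)) := by
  have hcount : ∑ p : Fin (n + 1), ∑ s : Bool, (bDescents (n + 1) (insertMax w p s) : R) =
      2 * n * bDescents n w + 2 * n + 1 := by
    exact_mod_cast congrArg (Nat.cast : ℕ → R) (sum_bDescents_insertMax w)
  simp only [prod_range_succ_of_eq_or_eq x (bDescents_insertMax_eq_or_eq w _ _), ← sum_mul,
    mul_sub, sum_sub_distrib, ← mul_sum, sum_const, card_univ, Fintype.card_fin,
    Fintype.card_bool, hcount, nsmul_eq_mul]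
  push_cast
  ring

lemma insertMax_bijective (n : ℕ) :
    Function.Bijective fun x : SignedPerm n × Fin (n + 1) × Bool =>
      insertMax x.1 x.2.1 x.2.2 := by
  rw [Fintype.bijective_iff_injective_and_card]
  constructor
  · rintro ⟨w, p, s⟩ ⟨w', p', s'⟩ h
    simp only [insertMax, Prod.mk.injEq] at h
    obtain ⟨hperm, hsign⟩ := h
    obtain rfl : p = p' := (insertMaxPerm w'.1 p').injective <| by
      rw [insertMaxPerm_apply_self, ← hperm, insertMaxPerm_apply_self]
    obtain rfl : s = s' := by simpa using congrFun hsign p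
    have hw₁ : w.1 = w'.1 := Equiv.ext fun i => Fin.castSucc_injective n <| by
      rw [← insertMaxPerm_apply_succAbove, ← insertMaxPerm_apply_succAbove, hperm]
    have hw₂ : w.2 = w'.2 := funext fun i => by simpa using congrFun hsign (p.succAbove i)
    rw [Prod.ext hw₁ hw₂]
  · simp only [Fintype.card_prod, Fintype.card_perm, Fintype.card_fun, Fintype.card_fin,
      Fintype.card_bool, Nat.factorial_succ]
    ring

theorem sum_prod_bDescents {R : Type*} [CommRing R] (x : R) (n : ℕ) :
    ∑ w : SignedPerm n, ∏ j ∈ range n, (x + 2 * j + 1 - 2 * (bDescents n w : R)) =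
      x ^ n * 2 ^ n * n.factorial := by
  induction n with
  | zero => simp
  | succ n ih =>
    rw [← (insertMax_bijective n).sum_comp, Fintype.sum_prod_type]
    simp only [Fintype.sum_prod_type, sum_prod_insertMax, ← mul_sum, ih, Nat.factorial_succ]
    push_cast
    ring

theorem sum_shuffle_measure_hyperoctahedral_general (n q : ℕ) :
    ∑ w : SignedPerm n, ∏ j ∈ Finset.range n,
        ((q : ℤ) + 2 * j + 1 - 2 * (bDescents n w : ℤ)) =
      (q : ℤ) ^ n * 2 ^ n * (Nat.factorial n) :=
  sum_prod_bDescents (q : ℤ) n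

/-- The type-`B` shuffling measure
`H_{B_n,q}(w) = (q+1-2d(w))(q+3-2d(w))⋯(q+2n-1-2d(w)) / (q^n · 2^n · n!)`
sums to `1` over `B_n`. -/
theorem sum_shuffle_measure_hyperoctahedral (n q : ℕ) (hn : 1 ≤ n) (hq : Odd q)
    (hq0 : 0 < q) :
    ∑ w : SignedPerm n, ∏ j ∈ Finset.range n,
        ((q : ℤ) + 2 * j + 1 - 2 * (bDescents n w : ℤ)) =
      (q : ℤ) ^ n * 2 ^ n * (Nat.factorial n) :=
  sum_shuffle_measure_hyperoctahedral_general n q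
end

section
/- Let p be a prime not dividing n and q a power of p. For each partition λ of n, the number of monic degree-n polynomials f over F_q with vanishing coefficient of x^{n-1} whose irreducible factorization has degree multiset λ equals (1/q) times the number of all monic degree-n polynomials over F_q with degree multiset λ. -/
/-!
Substituting `X ↦ X + r` is a ring automorphism of `F[X]` that preserves monicity and degree, hence
the factorization type, and it adds `n * r` to the coefficient of `X ^ (n - 1)` of a monic
polynomial of degree `n`. As `n` is invertible in `F`, every monic polynomial of degree `n` is
reached exactly once from a pair `(r, g)` with `g` of vanishing `X ^ (n - 1)`-coefficient, which
gives a bijection between `F × {g}` and all polynomials of the given type.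
-/

open Polynomial

/-- The factorization type of a polynomial: the multiset of degrees of its monic
irreducible factors, with multiplicity. -/
noncomputable def factorType {F : Type*} [Field F] [DecidableEq F] (f : F[X]) : Multiset ℕ :=
  (UniqueFactorizationMonoid.normalizedFactors f).map Polynomial.natDegree

namespace UniqueFactorizationMonoid

theorem normalizedFactors_map_mulEquiv {α β : Type*}
    [CommMonoidWithZero α] [NormalizationMonoid α] [UniqueFactorizationMonoid α]
    [CommMonoidWithZero β] [NormalizationMonoid β] [UniqueFactorizationMonoid β]
    {E : Type*} [EquivLike E α β] [MulEquivClass E α β] (f : E)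
    (he : ∀ x, normalize (f x) = f (normalize x)) (a : α) :
    normalizedFactors (f a) = (normalizedFactors a).map f := by
  rcases eq_or_ne a 0 with rfl | ha
  · simp
  have hassoc : Associated (f a) ((normalizedFactors a).map f).prod := by
    rw [← map_multiset_prod]
    exact (prod_normalizedFactors ha).symm.map f
  have hfa : f a ≠ 0 := EmbeddingLike.map_ne_zero_iff.mpr ha
  rw [(associated_iff_normalizedFactors_eq_normalizedFactors hfa
      (hassoc.ne_zero_iff.mp hfa)).mp hassoc, normalizedFactors_prod_eq, Multiset.map_map]
  · exact Multiset.map_congr rfl fun p hp => by simp [he, normalize_normalized_factor p hp]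
  · simp only [Multiset.mem_map, forall_exists_index, and_imp, forall_apply_eq_imp_iff₂]
    exact fun p hp => (MulEquiv.irreducible_iff (MulEquivClass.toMulEquiv f)).mpr
      (irreducible_of_normalized_factor p hp)

end UniqueFactorizationMonoid

namespace Polynomial

open UniqueFactorizationMonoid

theorem coeff_taylor_natDegree_sub_one {R : Type*} [CommRing R] (r : R) (g : R[X]) :
    (taylor r g).coeff (g.natDegree - 1) =
      g.coeff (g.natDegree - 1) + g.natDegree * r * g.leadingCoeff := by
  rcases Nat.eq_zero_or_pos g.natDegree with h0 | hpos
  · rw [eq_C_of_natDegree_eq_zero h0]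
    simp
  -- The Hasse derivative of order `natDegree g - 1` is linear, so its value at `r` has two terms.
  have hdeg : (hasseDeriv (g.natDegree - 1) g).natDegree < 2 := by
    have := natDegree_hasseDeriv_le g (g.natDegree - 1)
    omega
  rw [taylor_coeff, eval_eq_sum_range' hdeg, Finset.sum_range_succ, Finset.sum_range_one,
    hasseDeriv_coeff, hasseDeriv_coeff, zero_add, Nat.add_sub_cancel' hpos, Nat.choose_self,
    Nat.choose_symm hpos, Nat.choose_one_right, leadingCoeff]
  simp only [Nat.cast_one]
  ring

theorem Monic.taylor {R : Type*} [CommRing R] {g : R[X]} (hg : g.Monic) (r : R) :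
    (taylor r g).Monic := by
  rw [Monic, leadingCoeff_taylor]
  exact hg

section Field

variable {K : Type*} [Field K]

theorem coeff_taylor_sub_one_of_monic {g : K[X]} (hg : g.Monic) {n : ℕ} (hd : g.natDegree = n)
    (r : K) : (taylor r g).coeff (n - 1) = g.coeff (n - 1) + n * r := by
  rw [← hd, coeff_taylor_natDegree_sub_one, hg.leadingCoeff, mul_one]

noncomputable def taylorShiftEquiv {n : ℕ} (hn : (n : K) ≠ 0) (P : K[X] → Prop)
    (hP : ∀ r g, P g → P (taylor r g)) :
    K × {g : K[X] // g.Monic ∧ g.natDegree = n ∧ g.coeff (n - 1) = 0 ∧ P g} ≃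
      {f : K[X] // f.Monic ∧ f.natDegree = n ∧ P f} where
  toFun x := ⟨taylor x.1 x.2.1, x.2.2.1.taylor _, by rw [natDegree_taylor, x.2.2.2.1],
    hP _ _ x.2.2.2.2.2⟩
  invFun f := ⟨f.1.coeff (n - 1) / n, taylor (-(f.1.coeff (n - 1) / n)) f.1,
    f.2.1.taylor _, by rw [natDegree_taylor, f.2.2.1],
    by rw [coeff_taylor_sub_one_of_monic f.2.1 f.2.2.1]; field_simp; ring, hP _ _ f.2.2.2⟩
  left_inv := by
    rintro ⟨r, g, hg, hd, hc, -⟩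
    have hcoeff : (taylor r g).coeff (n - 1) / n = r := by
      rw [coeff_taylor_sub_one_of_monic hg hd, hc, zero_add, mul_div_cancel_left₀ r hn]
    ext : 2 <;> simp [hcoeff, taylor_taylor]
  right_inv := by
    rintro ⟨f, -⟩
    ext : 1
    simp [taylor_taylor]

theorem card_mul_card_monic_coeff_sub_one_eq_zero {n : ℕ} (hn : (n : K) ≠ 0)
    (P : K[X] → Prop) (hP : ∀ r g, P g → P (taylor r g)) :
    Nat.card K * Nat.card {g : K[X] // g.Monic ∧ g.natDegree = n ∧ g.coeff (n - 1) = 0 ∧ P g} =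
      Nat.card {f : K[X] // f.Monic ∧ f.natDegree = n ∧ P f} := by
  rw [← Nat.card_prod, Nat.card_congr (taylorShiftEquiv hn P hP)]

variable [DecidableEq K]

theorem normalize_taylor (r : K) (g : K[X]) : normalize (taylor r g) = taylor r (normalize g) := by
  simp [normalize_apply, taylor_mul, leadingCoeff_taylor]

theorem normalizedFactors_taylor (r : K) (g : K[X]) :
    normalizedFactors (taylor r g) = (normalizedFactors g).map (taylor r) :=
  normalizedFactors_map_mulEquiv (taylorEquiv r) (normalize_taylor r) g

theorem factorType_taylor (r : K) (g : K[X]) : factorType (taylor r g) = factorType g := by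
  simp [factorType, normalizedFactors_taylor, natDegree_taylor]

end Field

end Polynomial

theorem card_trace_zero_by_type_general (F : Type*) [Field F] [DecidableEq F] [Fintype F]
    (p n q : ℕ) [CharP F p] (hpn : ¬ p ∣ n)
    (hq : Fintype.card F = q) (lam : Multiset ℕ) :
    q * Nat.card {f : F[X] //
        f.Monic ∧ f.natDegree = n ∧ f.coeff (n - 1) = 0 ∧ factorType f = lam} =
      Nat.card {f : F[X] // f.Monic ∧ f.natDegree = n ∧ factorType f = lam} := by
  have hn : (n : F) ≠ 0 := (CharP.cast_eq_zero_iff F p n).not.mpr hpn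
  rw [← hq, ← Nat.card_eq_fintype_card]
  exact card_mul_card_monic_coeff_sub_one_eq_zero hn (factorType · = lam)
    fun r g hg => (factorType_taylor r g).trans hg

/-- If `p ∤ n`, then for each partition `λ` of `n`, the number of monic
degree-`n` polynomials over `F_q` with vanishing coefficient of `x^{n-1}` and
factorization type `λ` is `1/q` times the number of all monic degree-`n`
polynomials over `F_q` with factorization type `λ`. -/
theorem card_trace_zero_by_type (F : Type*) [Field F] [DecidableEq F] [Fintype F]
    (p n q : ℕ) (hp : p.Prime) [CharP F p] (hpn : ¬ p ∣ n)
    (hq : Fintype.card F = q) (lam : Multiset ℕ) (hlam : lam.sum = n) :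
    q * Nat.card {f : F[X] //
        f.Monic ∧ f.natDegree = n ∧ f.coeff (n - 1) = 0 ∧ factorType f = lam} =
      Nat.card {f : F[X] // f.Monic ∧ f.natDegree = n ∧ factorType f = lam} :=
  card_trace_zero_by_type_general F p n q hpn hq lam
end

section
/- Let p be a prime not dividing n (so p is very good for type A_{n-1}) and q a power of p. The number of monic degree-n polynomials over F_q with vanishing coefficient of x^{n-1} that split completely into linear factors over F_q equals binomial(q+n-1, n)/q = ∏_{i=1}^{n-1}(q+i)/n!. -/
/-!
A monic split polynomial is determined by its multiset of roots, its degree is the number of roots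
and its coefficient of `x^(n-1)` is minus their sum. So we count multisets of `n` elements of `F`
with sum zero. Since `n` is invertible in `F`, subtracting the mean `s.sum / n` identifies all
`n`-element multisets, of which there are `C(q+n-1, n)`, with pairs (sum-zero multiset, mean).
-/

open Polynomial

namespace Polynomial

variable {R : Type*} [CommRing R] [IsDomain R]

noncomputable def monicSplitsEquivMultiset : {f : R[X] // f.Monic ∧ f.Splits} ≃ Multiset R where
  toFun f := f.1.roots
  invFun s := ⟨(s.map (X - C ·)).prod, monic_multiset_prod_of_monic _ _ fun a _ => monic_X_sub_C a,
    .multisetProd (by simp [Splits.X_sub_C])⟩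
  left_inv f := Subtype.ext (f.2.2.eq_prod_roots_of_monic f.2.1).symm
  right_inv := roots_multiset_prod_X_sub_C

theorem Monic.coeff_natDegree_sub_one_eq_zero_iff_sum_roots {f : R[X]} (hm : f.Monic)
    (hs : f.Splits) (hf : 0 < f.natDegree) : f.coeff (f.natDegree - 1) = 0 ↔ f.roots.sum = 0 := by
  rw [← nextCoeff_of_natDegree_pos hf, hs.nextCoeff_eq_neg_sum_roots_of_monic hm, neg_eq_zero]

noncomputable def monicSplitsTraceZeroEquiv {n : ℕ} (hn : 1 ≤ n) :
    {f : R[X] // f.Monic ∧ f.natDegree = n ∧ f.coeff (n - 1) = 0 ∧ f.Splits} ≃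
      {s : Multiset R // Multiset.card s = n ∧ s.sum = 0} :=
  (Equiv.subtypeEquivRight fun _ => by tauto).trans <|
    (Equiv.subtypeSubtypeEquivSubtypeInter (fun f : R[X] => f.Monic ∧ f.Splits)
      fun f => f.natDegree = n ∧ f.coeff (n - 1) = 0).symm.trans <|
    monicSplitsEquivMultiset.subtypeEquiv fun ⟨f, hm, hs⟩ => by
      change _ ↔ Multiset.card f.roots = n ∧ _
      rw [← hs.natDegree_eq_card_roots]
      refine and_congr_right fun hd => ?_
      subst hd
      exact hm.coeff_natDegree_sub_one_eq_zero_iff_sum_roots hs hn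

end Polynomial

namespace Multiset

theorem sum_map_add_const {M : Type*} [AddCommMonoid M] (s : Multiset M) (a : M) :
    (s.map (· + a)).sum = s.sum + card s • a := by
  simp [sum_map_add]

variable {K : Type*} [Field K]

noncomputable def cardEquivSumZeroProd {n : ℕ} (hn : (n : K) ≠ 0) :
    {s : Multiset K // card s = n} ≃ {s : Multiset K // card s = n ∧ s.sum = 0} × K where
  toFun s := (⟨s.1.map (· + -(s.1.sum / n)), by simp [s.2], by
      rw [sum_map_add_const, s.2, nsmul_eq_mul]; field_simp; ring⟩, s.1.sum / n)
  invFun t := ⟨t.1.1.map (· + t.2), by simp [t.1.2.1]⟩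
  left_inv s := by ext1; simp [map_map]
  right_inv := fun ⟨⟨t, ht, hsum⟩, a⟩ => by
    have hmean : (t.map (· + a)).sum / n = a := by
      rw [sum_map_add_const, hsum, ht, nsmul_eq_mul]; field_simp; ring
    refine Prod.ext (Subtype.ext ?_) hmean
    dsimp only
    rw [hmean, map_map]
    simp

end Multiset

theorem Nat.choose_add_sub_one_mul_factorial {q n : ℕ} (hn : 1 ≤ n) :
    (q + n - 1).choose n * n.factorial = q * ∏ i ∈ Finset.range (n - 1), (q + i + 1) := by
  obtain ⟨m, rfl⟩ := Nat.exists_eq_add_of_le' hn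
  rw [mul_comm, ← Nat.ascFactorial_eq_factorial_mul_choose', Nat.ascFactorial_eq_prod_range,
    Finset.prod_range_succ']
  simp [add_assoc, mul_comm]

theorem card_split_trace_zero_general (F : Type*) [Field F] [Fintype F] (p n q : ℕ)
    [CharP F p] (hpn : ¬ p ∣ n) (hq : Fintype.card F = q)
    (hn : 1 ≤ n) :
    Nat.card {f : F[X] //
        f.Monic ∧ f.natDegree = n ∧ f.coeff (n - 1) = 0 ∧
          f.Splits} * q =
      Nat.choose (q + n - 1) n ∧
    Nat.card {f : F[X] //
        f.Monic ∧ f.natDegree = n ∧ f.coeff (n - 1) = 0 ∧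
          f.Splits} * Nat.factorial n =
      ∏ i ∈ Finset.range (n - 1), (q + i + 1) := by
  classical
  have hnF : (n : F) ≠ 0 := by rwa [Ne, CharP.cast_eq_zero_iff F p]
  have hcard : Nat.card {f : F[X] //
      f.Monic ∧ f.natDegree = n ∧ f.coeff (n - 1) = 0 ∧ f.Splits} * q = (q + n - 1).choose n :=
    calc _ = Nat.card {s : Multiset F // s.card = n ∧ s.sum = 0} * Nat.card F := by
          rw [Nat.card_congr (monicSplitsTraceZeroEquiv hn), Nat.card_eq_fintype_card (α := F), hq]
      _ = Nat.card (Sym F n) := by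
          rw [← Nat.card_prod, ← Nat.card_congr (Multiset.cardEquivSumZeroProd hnF)]; rfl
      _ = _ := by
          rw [Nat.card_eq_fintype_card, Sym.card_sym_eq_multichoose, Nat.multichoose_eq, hq]
  have hq0 : 0 < q := hq ▸ Fintype.card_pos
  refine ⟨hcard, Nat.eq_of_mul_eq_mul_left hq0 ?_⟩
  rw [← Nat.choose_add_sub_one_mul_factorial hn, ← hcard]
  ring

/-- Let `p ∤ n` (so `p` is very good for type `A_{n-1}`) and `q` a power of
`p`. The number of monic degree-`n` polynomials over `F_q` with vanishing
coefficient of `x^{n-1}` that split completely into linear factors is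
`C(q+n-1, n)/q = ∏_{i=1}^{n-1}(q+i)/n!`. -/
theorem card_split_trace_zero (F : Type*) [Field F] [Fintype F] (p n q : ℕ)
    (hp : p.Prime) [CharP F p] (hpn : ¬ p ∣ n) (hq : Fintype.card F = q)
    (hn : 1 ≤ n) :
    Nat.card {f : F[X] //
        f.Monic ∧ f.natDegree = n ∧ f.coeff (n - 1) = 0 ∧
          f.Splits} * q =
      Nat.choose (q + n - 1) n ∧
    Nat.card {f : F[X] //
        f.Monic ∧ f.natDegree = n ∧ f.coeff (n - 1) = 0 ∧
          f.Splits} * Nat.factorial n =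
      ∏ i ∈ Finset.range (n - 1), (q + i + 1) :=
  card_split_trace_zero_general F p n q hpn hq hn
end

section
/- Let q be odd and n ≥ 1. Then Σ_{k=0}^{n} B(n,k) · ∏_{j=1}^{n} (q + 2n + 1 - 2k - 2j) = q^n · 2^n · n!, where B(n,k) is the number of signed permutations in B_n with exactly k type-B descents. -/
/-- The type-`B` Eulerian number `B(n,k)`: the number of signed permutations
with exactly `k` type-`B` descents. -/
def bEulerianNumber (n k : ℕ) : ℕ :=
  ((Finset.univ : Finset (SignedPerm n)).filter
    (fun w => bDescents n w = k)).card

/-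
Write `q = 2t + 1`. The `k`-th product is `2^n n! C(t+n-k, n)`, so the claim is the Worpitzky
identity `∑ₖ B(n,k) C(t+n-k, n) = (2t+1)^n`, proved by counting the cube `[-t, t]^n`.
Call `f` compatible with `w` if `f ∘ w` has the signs of `w` and `|f ∘ w|`, extended by `0`,
decreases weakly, and strictly across each descent of `w`. Sorting `f` shows that each `f` is
compatible with exactly one `w`. The `f` compatible with `w` are determined by `m = |f ∘ w|`,
with `t ≥ m₁ ≥ ⋯ ≥ mₙ` dropping at each of the `d(w)` descents; subtracting a staircase turns
`m` into an `n`-subset of an interval of `t + n - d(w)` integers.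
-/

open Finset

namespace Fin

variable {α : Type*} {n : ℕ}

open scoped Relator in
theorem liftFun_iff_adjacent (r : α → α → Prop) [IsTrans α r] {f : Fin n → α} :
    ((· < ·) ⇒ r) f f ↔
      ∀ (i : Fin n) (h : (i : ℕ) + 1 < n), r (f i) (f ⟨i + 1, h⟩) := by
  cases n with
  | zero => exact ⟨fun _ i => i.elim0, fun _ i => i.elim0⟩
  | succ n =>
    rw [liftFun_iff_succ]
    exact ⟨fun H i h => H ⟨i, by omega⟩, fun H i => H i.castSucc (by simp)⟩

theorem strictMono_iff_adjacent [Preorder α] {f : Fin n → α} :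
    StrictMono f ↔ ∀ (i : Fin n) (h : (i : ℕ) + 1 < n), f i < f ⟨i + 1, h⟩ :=
  liftFun_iff_adjacent (· < ·)

theorem antitone_iff_adjacent [Preorder α] {f : Fin n → α} :
    Antitone f ↔ ∀ (i : Fin n) (h : (i : ℕ) + 1 < n), f ⟨i + 1, h⟩ ≤ f i :=
  antitone_iff_forall_lt.trans (liftFun_iff_adjacent (· ≥ ·))

end Fin

open scoped Classical in
theorem card_strictMono_piFinset {α : Type*} [LinearOrder α] (s : Finset α) (n : ℕ) :
    #{v ∈ Fintype.piFinset fun _ : Fin n => s | StrictMono v} = (#s).choose n := by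
  rw [← card_powersetCard]
  refine card_nbij (fun v => univ.image v) (fun v hv => ?_) (fun v hv u hu huv => ?_)
    (fun S hS => ?_)
  · simp only [coe_filter, Fintype.mem_piFinset, Set.mem_ofPred_eq] at hv
    rw [mem_coe, mem_powersetCard, card_image_of_injective _ hv.2.injective, card_univ,
      Fintype.card_fin]
    exact ⟨image_subset_iff.2 fun i _ => hv.1 i, rfl⟩
  · simp only [coe_filter, Set.mem_ofPred_eq] at hv hu
    rw [← hv.2.range_inj hu.2, ← Fintype.coe_image_univ, ← Fintype.coe_image_univ]
    exact congrArg _ huv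
  · rw [mem_coe, mem_powersetCard] at hS
    refine ⟨S.orderEmbOfFin hS.2, ?_, ?_⟩
    · simp only [coe_filter, Fintype.mem_piFinset, Set.mem_ofPred_eq]
      exact ⟨fun i => hS.1 (S.orderEmbOfFin_mem hS.2 i), (S.orderEmbOfFin hS.2).strictMono⟩
    · rw [← coe_inj, Fintype.coe_image_univ, range_orderEmbOfFin]

section GappedDecreasing

variable {n : ℕ} {a : ℕ → ℕ} {m : Fin n → ℤ}

def nextOrZero (m : Fin n → ℤ) (i : Fin n) : ℤ :=
  if h : (i : ℕ) + 1 < n then m ⟨i + 1, h⟩ else 0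

def IsGappedDecreasing (a : ℕ → ℕ) (m : Fin n → ℤ) : Prop :=
  ∀ i : Fin n, nextOrZero m i + a i ≤ m i

theorem IsGappedDecreasing.antitone (hm : IsGappedDecreasing a m) : Antitone m :=
  Fin.antitone_iff_adjacent.2 fun i h => by
    have := hm i
    rw [nextOrZero, dif_pos h] at this
    omega

theorem IsGappedDecreasing.nonneg (hm : IsGappedDecreasing a m) (i : Fin n) : 0 ≤ m i := by
  have hi := i.isLt
  have hlast := hm ⟨n - 1, by omega⟩
  rw [nextOrZero, dif_neg (show ¬n - 1 + 1 < n by omega)] at hlast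
  have := hm.antitone (show i ≤ ⟨n - 1, by omega⟩ from Fin.mk_le_mk.2 (by omega))
  omega

/-- `m ↦ gapShift a - m` turns the sequences with `m i ≥ m (i + 1) + a i` into strictly
increasing ones, which are just subsets of an interval. -/
def gapShift (a : ℕ → ℕ) (i : ℕ) : ℤ := i - ∑ j ∈ range i, a j

@[simp]
theorem gapShift_zero (a : ℕ → ℕ) : gapShift a 0 = 0 := by
  simp [gapShift]

theorem gapShift_succ (a : ℕ → ℕ) (i : ℕ) :
    gapShift a (i + 1) = gapShift a i + 1 - a i := by
  simp only [gapShift, sum_range_succ]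
  push_cast
  ring

theorem isGappedDecreasing_iff_strictMono :
    IsGappedDecreasing a m ↔ StrictMono (fun i : Fin n => gapShift a i - m i) ∧
      ∀ i : Fin n, gapShift a i - m i < gapShift a n := by
  constructor
  · intro hm
    have hmono : StrictMono (fun i : Fin n => gapShift a i - m i) :=
      Fin.strictMono_iff_adjacent.2 fun i h => by
        have := hm i
        rw [nextOrZero, dif_pos h] at this
        simp only [gapShift_succ]
        omega
    refine ⟨hmono, fun i => ?_⟩
    cases n with
    | zero => exact i.elim0
    | succ k =>
      have hlast := hm (Fin.last k)
      rw [nextOrZero, dif_neg (by simp)] at hlast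
      have := hmono.monotone (Fin.le_last i)
      simp only [Fin.val_last, gapShift_succ] at this hlast ⊢
      omega
  · rintro ⟨hmono, hbound⟩ i
    by_cases h : (i : ℕ) + 1 < n
    · have := Fin.strictMono_iff_adjacent.1 hmono i h
      rw [nextOrZero, dif_pos h]
      simp only [gapShift_succ] at this
      omega
    · have := hbound i
      rw [congrArg (gapShift a) (show n = i + 1 by omega), gapShift_succ] at this
      rw [nextOrZero, dif_neg h]
      omega

open scoped Classical in
theorem card_gappedDecreasing (a : ℕ → ℕ) (n t : ℕ) :
    #{m ∈ Fintype.piFinset fun _ : Fin n => Icc (0 : ℤ) t | IsGappedDecreasing a m} =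
      (t + n - ∑ j ∈ range n, a j).choose n := by
  have hcard : #(Icc (-(t : ℤ)) (gapShift a n - 1)) = t + n - ∑ j ∈ range n, a j := by
    rw [Int.card_Icc, gapShift]
    omega
  rw [← hcard, ← card_strictMono_piFinset]
  refine card_nbij' (fun m i => gapShift a i - m i) (fun v i => gapShift a i - v i) ?_ ?_
    (fun m _ => by simp) (fun v _ => by simp)
  · intro m hm
    simp only [coe_filter, Fintype.mem_piFinset, mem_Icc, Set.mem_ofPred_eq] at hm ⊢
    obtain ⟨hmono, hbound⟩ := isGappedDecreasing_iff_strictMono.1 hm.2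
    refine ⟨fun i => ⟨?_, by linarith [hbound i]⟩, hmono⟩
    have := hmono.monotone (Fin.mk_le_mk.2 (Nat.zero_le i) : (⟨0, i.pos⟩ : Fin n) ≤ i)
    simp only [Fin.eta, gapShift_zero, zero_sub] at this
    linarith [(hm.1 ⟨0, i.pos⟩).2]
  · intro v hv
    simp only [coe_filter, Fintype.mem_piFinset, mem_Icc, Set.mem_ofPred_eq] at hv ⊢
    have hm : IsGappedDecreasing a fun i : Fin n => gapShift a i - v i :=
      isGappedDecreasing_iff_strictMono.2
        ⟨by simpa using hv.2, fun i => by simpa using Int.lt_of_le_sub_one (hv.1 i).2⟩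
    refine ⟨fun i => ⟨hm.nonneg i, ?_⟩, hm⟩
    have := hm.antitone (Fin.mk_le_mk.2 (Nat.zero_le i) : (⟨0, i.pos⟩ : Fin n) ≤ i)
    simp only [Fin.eta, gapShift_zero, zero_sub] at this
    linarith [(hv.1 ⟨0, i.pos⟩).1]

end GappedDecreasing

namespace SignedPerm

variable {n : ℕ} (w : SignedPerm n)

def IsBDescent (i : Fin n) : Prop :=
  lamRank n (signedVal n w i) < lamRank n (nextVal n w i)

instance : DecidablePred w.IsBDescent := fun _ => inferInstanceAs (Decidable (_ < _))

theorem bDescents_le : bDescents n w ≤ n :=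
  (card_filter_le _ _).trans_eq (card_fin n)

def descentIndicator (j : ℕ) : ℕ :=
  if h : j < n then if w.IsBDescent ⟨j, h⟩ then 1 else 0 else 0

theorem descentIndicator_val (i : Fin n) :
    w.descentIndicator i = if w.IsBDescent i then 1 else 0 := by
  simp [descentIndicator]

theorem sum_descentIndicator : ∑ j ∈ range n, w.descentIndicator j = bDescents n w := by
  rw [← Fin.sum_univ_eq_sum_range, bDescents, card_filter]
  exact sum_congr rfl fun i _ => w.descentIndicator_val i

variable {w}

theorem lamRank_signedVal (i : Fin n) :
    lamRank n (signedVal n w i) =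
      if w.2 i then 2 * (n : ℤ) + 1 - (w.1 i : ℕ) else ((w.1 i : ℕ) : ℤ) + 1 := by
  unfold lamRank signedVal
  split_ifs <;> omega

theorem isBDescent_iff_of_not_lt {i : Fin n} (h : ¬(i : ℕ) + 1 < n) :
    w.IsBDescent i ↔ w.2 i = false := by
  rw [IsBDescent, nextVal, dif_neg h, lamRank_signedVal, lamRank,
    if_pos (show (0 : ℤ) < n + 1 by omega)]
  have := (w.1 i).isLt
  cases w.2 i <;> simp only [reduceIte, Bool.false_eq_true, Bool.true_eq_false, iff_true, iff_false,
    not_lt] <;> omega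

theorem isBDescent_of_barred_succ {i : Fin n} (h : (i : ℕ) + 1 < n) (hi : w.2 i = false)
    (hj : w.2 ⟨i + 1, h⟩ = true) : w.IsBDescent i := by
  rw [IsBDescent, nextVal, dif_pos h, lamRank_signedVal, lamRank_signedVal, hi, hj]
  have := (w.1 i).isLt
  have := (w.1 ⟨i + 1, h⟩).isLt
  simp only [reduceIte, Bool.false_eq_true]
  omega

/-- The position of `a` in the order `0, 1, -1, 2, -2, …`. -/
def signRank (a : ℤ) : ℤ := if 0 < a then 2 * a - 1 else -(2 * a)

/-- Sorting the positions of `f` by this key yields its compatible signed permutation: values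
in decreasing `signRank`, and among equal values the order that creates no descent. -/
def sortKey (f : Fin n → ℤ) (j : Fin n) : ℤ ×ₗ ℤ :=
  toLex (-signRank (f j), if 0 < f j then -(j : ℤ) else j)

theorem sortKey_injective (f : Fin n → ℤ) : Function.Injective (sortKey f) := by
  intro x y h
  simp only [sortKey, signRank, toLex_inj, Prod.mk.injEq] at h
  ext
  split_ifs at h <;> omega

def IsCompatible (w : SignedPerm n) (f : Fin n → ℤ) : Prop :=
  (∀ i, 0 < f (w.1 i) ↔ w.2 i = false) ∧
    IsGappedDecreasing w.descentIndicator fun i => |f (w.1 i)|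

variable {f : Fin n → ℤ}

theorem abs_add_le_abs_iff_sortKey_lt (hs : ∀ i, 0 < f (w.1 i) ↔ w.2 i = false) (i : Fin n)
    (h : (i : ℕ) + 1 < n) :
    |f (w.1 ⟨i + 1, h⟩)| + (if w.IsBDescent i then 1 else 0) ≤ |f (w.1 i)| ↔
      sortKey f (w.1 i) < sortKey f (w.1 ⟨i + 1, h⟩) := by
  have hne : (w.1 i : ℕ) ≠ w.1 ⟨i + 1, h⟩ := fun e => by
    simpa [Fin.ext_iff] using w.1.injective (Fin.ext e)
  have hx := hs i
  have hy := hs ⟨i + 1, h⟩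
  have ha := abs_cases (f (w.1 i))
  have hb := abs_cases (f (w.1 ⟨i + 1, h⟩))
  simp only [IsBDescent, nextVal, dif_pos h, lamRank_signedVal, sortKey, Prod.Lex.toLex_lt_toLex,
    signRank]
  revert hx hy
  cases w.2 i <;> cases w.2 ⟨i + 1, h⟩ <;>
    simp only [reduceIte, Bool.false_eq_true, Bool.true_eq_false, iff_true, iff_false, not_lt] <;>
    intro hx hy <;> split_ifs <;> omega

theorem isCompatible_iff :
    IsCompatible w f ↔
      (∀ i, 0 < f (w.1 i) ↔ w.2 i = false) ∧ StrictMono (sortKey f ∘ w.1) := by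
  refine and_congr_right fun hs => ?_
  simp only [IsGappedDecreasing, nextOrZero, descentIndicator_val, Nat.cast_ite, Nat.cast_one,
    Nat.cast_zero, Fin.strictMono_iff_adjacent, Function.comp_apply]
  constructor
  · intro hm i h
    have := hm i
    rw [dif_pos h] at this
    exact (abs_add_le_abs_iff_sortKey_lt hs i h).1 this
  · intro hk i
    by_cases h : (i : ℕ) + 1 < n
    · rw [dif_pos h]
      exact (abs_add_le_abs_iff_sortKey_lt hs i h).2 (hk i h)
    · simp only [dif_neg h, isBDescent_iff_of_not_lt h, ← hs i]
      split_ifs with hpos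
      · rw [abs_of_pos hpos]
        omega
      · positivity

def signedPermOf (f : Fin n → ℤ) : SignedPerm n :=
  (Tuple.sort (sortKey f), fun i => decide (f (Tuple.sort (sortKey f) i) ≤ 0))

theorem isCompatible_iff_signedPermOf_eq : IsCompatible w f ↔ signedPermOf f = w := by
  rw [isCompatible_iff]
  constructor
  · rintro ⟨hs, hmono⟩
    have hsorted := Tuple.unique_monotone (Tuple.monotone_sort (sortKey f)) hmono.monotone
    have hperm : Tuple.sort (sortKey f) = w.1 :=
      Equiv.ext fun j => sortKey_injective f (congrFun hsorted j)
    refine Prod.ext hperm (funext fun i => ?_)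
    rw [signedPermOf, hperm, Bool.eq_iff_iff, decide_eq_true_iff, ← not_lt, hs i,
      Bool.not_eq_false]
  · rintro rfl
    exact ⟨fun i => by simp [signedPermOf], (Tuple.monotone_sort _).strictMono_of_injective
      ((sortKey_injective f).comp (Equiv.injective _))⟩

theorem pos_of_isGappedDecreasing {m : Fin n → ℤ}
    (hm : IsGappedDecreasing w.descentIndicator m) : ∀ i, w.2 i = false → 0 < m i
  | i, hi => by
    have hmi := hm i
    rw [nextOrZero, descentIndicator_val] at hmi
    by_cases h : (i : ℕ) + 1 < n
    · rw [dif_pos h] at hmi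
      by_cases hd : w.IsBDescent i
      · have := hm.nonneg ⟨i + 1, h⟩
        rw [if_pos hd, Nat.cast_one] at hmi
        omega
      · have hj : w.2 ⟨i + 1, h⟩ = false := by
          by_contra hj
          exact hd (isBDescent_of_barred_succ h hi (by simpa using hj))
        have := pos_of_isGappedDecreasing hm ⟨i + 1, h⟩ hj
        rw [if_neg hd, Nat.cast_zero] at hmi
        omega
    · rw [dif_neg h, if_pos ((isBDescent_iff_of_not_lt h).2 hi), Nat.cast_one] at hmi
      omega
termination_by i => n - i

open scoped Classical in
theorem card_isCompatible (w : SignedPerm n) (t : ℕ) :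
    #{f ∈ Fintype.piFinset fun _ : Fin n => Icc (-(t : ℤ)) t | IsCompatible w f} =
      #{m ∈ Fintype.piFinset fun _ : Fin n => Icc (0 : ℤ) t |
        IsGappedDecreasing w.descentIndicator m} := by
  refine card_nbij' (fun f i => |f (w.1 i)|)
    (fun m j => if w.2 (w.1.symm j) then -m (w.1.symm j) else m (w.1.symm j)) ?_ ?_ ?_ ?_
  · intro f hf
    simp only [coe_filter, Fintype.mem_piFinset, mem_Icc, Set.mem_ofPred_eq] at hf ⊢
    exact ⟨fun i => ⟨abs_nonneg _, abs_le.2 (hf.1 _)⟩, hf.2.2⟩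
  · intro m hm
    simp only [coe_filter, Fintype.mem_piFinset, mem_Icc, Set.mem_ofPred_eq] at hm ⊢
    obtain ⟨hbox, hgap⟩ := hm
    have habs : ∀ i, |if w.2 i then -m i else m i| = m i := fun i => by
      split_ifs <;> simp [abs_of_nonneg (hbox i).1]
    refine ⟨fun j => abs_le.1 ((habs _).trans_le (hbox _).2), fun i => ?_, ?_⟩
    · simp only [Equiv.symm_apply_apply]
      by_cases hb : w.2 i
      · simp [hb, (hbox i).1]
      · simp [hb, pos_of_isGappedDecreasing hgap i (by simpa using hb)]
    · simpa [habs] using hgap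
  · intro f hf
    simp only [coe_filter, Fintype.mem_piFinset, mem_Icc, Set.mem_ofPred_eq] at hf
    funext j
    have := hf.2.1 (w.1.symm j)
    simp only [Equiv.apply_symm_apply] at this ⊢
    by_cases hb : w.2 (w.1.symm j)
    · simp only [hb, if_true, Bool.true_eq_false, iff_false, not_lt] at this ⊢
      rw [abs_of_nonpos this, neg_neg]
    · simp only [hb, Bool.false_eq_true, if_false, iff_true] at this ⊢
      exact abs_of_pos this
  · intro m hm
    simp only [coe_filter, Fintype.mem_piFinset, mem_Icc, Set.mem_ofPred_eq] at hm
    funext i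
    by_cases hb : w.2 i <;> simp [hb, abs_of_nonneg (hm.1 i).1]

open scoped Classical in
theorem sum_card_isCompatible (n t : ℕ) :
    ∑ w : SignedPerm n,
      #{f ∈ Fintype.piFinset fun _ : Fin n => Icc (-(t : ℤ)) t | IsCompatible w f} =
        (2 * t + 1) ^ n := by
  simp_rw [isCompatible_iff_signedPermOf_eq]
  rw [← card_eq_sum_card_fiberwise fun _ _ => mem_univ _, Fintype.card_piFinset, Int.card_Icc,
    show ((t : ℤ) + 1 - -t).toNat = 2 * t + 1 by omega, prod_const, card_univ, Fintype.card_fin]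

end SignedPerm

theorem sum_bEulerianNumber_mul_choose (n t : ℕ) :
    ∑ k ∈ range (n + 1), bEulerianNumber n k * (t + n - k).choose n = (2 * t + 1) ^ n := by
  classical
  calc _ = ∑ k ∈ range (n + 1), ∑ w ∈ univ with bDescents n w = k,
          (t + n - bDescents n w).choose n := by
        refine sum_congr rfl fun k _ => ?_
        rw [bEulerianNumber, card_eq_sum_ones, sum_mul, one_mul]
        exact sum_congr rfl fun w hw => by rw [(mem_filter.1 hw).2]
    _ = ∑ w : SignedPerm n, (t + n - bDescents n w).choose n :=
        sum_fiberwise_of_maps_to (fun w _ => mem_range.2 (Nat.lt_succ_of_le w.bDescents_le)) _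
    _ = ∑ w : SignedPerm n,
          #{f ∈ Fintype.piFinset fun _ : Fin n => Icc (-(t : ℤ)) t | w.IsCompatible f} := by
        simp only [SignedPerm.card_isCompatible, card_gappedDecreasing,
          SignedPerm.sum_descentIndicator]
    _ = (2 * t + 1) ^ n := SignedPerm.sum_card_isCompatible n t

theorem prod_two_mul_sub_eq (T n : ℕ) :
    ∏ j ∈ range n, 2 * ((T : ℤ) - j) = 2 ^ n * n.factorial * T.choose n := by
  rw [prod_mul_distrib, prod_const, card_range, ← descPochhammer_eval_eq_prod_range,
    descPochhammer_eval_eq_descFactorial, Nat.descFactorial_eq_factorial_mul_choose]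
  push_cast
  ring

theorem worpitzky_typeB_general (n q : ℕ) (hq : Odd q) :
    ∑ k ∈ Finset.range (n + 1), (bEulerianNumber n k : ℤ) *
        ∏ j ∈ Finset.range n, ((q : ℤ) + 2 * n + 1 - 2 * k - 2 * ((j : ℤ) + 1)) =
      (q : ℤ) ^ n * 2 ^ n * (Nat.factorial n) := by
  obtain ⟨t, rfl⟩ := hq
  have hprod : ∀ k ∈ range (n + 1),
      ∏ j ∈ range n, (((2 * t + 1 : ℕ) : ℤ) + 2 * n + 1 - 2 * k - 2 * ((j : ℤ) + 1)) =
        2 ^ n * n.factorial * (t + n - k).choose n := by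
    intro k hk
    have hkn : k ≤ t + n := by rw [mem_range] at hk; omega
    rw [← prod_two_mul_sub_eq, Nat.cast_sub hkn]
    refine prod_congr rfl fun j _ => ?_
    push_cast
    ring
  calc _ = ∑ k ∈ range (n + 1), (bEulerianNumber n k : ℤ) *
          (2 ^ n * n.factorial * (t + n - k).choose n) :=
        sum_congr rfl fun k hk => by rw [hprod k hk]
    _ = 2 ^ n * n.factorial *
          ((∑ k ∈ range (n + 1), bEulerianNumber n k * (t + n - k).choose n : ℕ) : ℤ) := by
        push_cast
        rw [mul_sum]
        exact sum_congr rfl fun k _ => by ring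
    _ = _ := by
        rw [sum_bEulerianNumber_mul_choose]
        push_cast
        ring

/-- The type-`B` Worpitzky-type identity: for odd `q` and `n ≥ 1`,
`∑_{k=0}^{n} B(n,k)·∏_{j=1}^{n}(q+2n+1-2k-2j) = q^n·2^n·n!`. -/
theorem worpitzky_typeB (n q : ℕ) (hn : 1 ≤ n) (hq : Odd q) :
    ∑ k ∈ Finset.range (n + 1), (bEulerianNumber n k : ℤ) *
        ∏ j ∈ Finset.range n, ((q : ℤ) + 2 * n + 1 - 2 * k - 2 * ((j : ℤ) + 1)) =
      (q : ℤ) ^ n * 2 ^ n * (Nat.factorial n) :=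
  worpitzky_typeB_general n q hq
end
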